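/- Suppose (α, β + ix) ∈ Dom(m)^𝒢 satisfies: (1) there is no D ∈ 𝒲 with α·D = 0 and x·D = 0; (2) x² is irrational; and (3) for each D ∈ 𝒲, at least one of the following two implications holds: [if pr(Re α)·D ≠ 0 then pr(β)·D ≠ 0], or [if α·D ≠ 0 then (Im α)·D ≠ 0]. Then there exists an uncountable subset Π ⊆ ℝ∖{0} which is dense in ℝ such that for every λ ∈ Π, the point (α, λβ + ix) lies in Dom(m)^𝒢 and, writing m(α, λβ + ix) = (α∨_λ, β∨_λ + i x∨_λ), there is no D ∈ 𝒲 with α∨_λ·D = 0 and x∨_λ·D = 0. -/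

import Mathlib

/-! For a fixed wall `D`, the conditions `α∨_λ·D = 0` and `x∨_λ·D = 0` are polynomial equations
of degree at most two in `λ` (real and imaginary parts of `α∨_λ·D`, and `x∨_λ·D`). If all their
coefficients vanished, the constant term `x²(v·D)/2 + v*·D` would vanish; since `v·D, v*·D ∈ ℤ`
and `x²` is irrational this gives `v·D = v*·D = 0`, so `pr` is invisible to `D` and the remaining
coefficients say `β·D = x·D = (Im α)·D = 0`, contradicting (1) and (3). Hence each wall is met
by finitely many `λ`. The walls are countable, being lattice vectors, so the `λ` to avoid form a
countable set, whose complement in `ℝ` is uncountable and dense. -/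

/- Context: `V` is a finite-dimensional real vector space with a nondegenerate symmetric
bilinear form `B` of signature `(3, dim V − 3)`.  We model the complexification `V_ℂ`
by pairs `(a, b) : V × V` representing `a + i·b`. -/

noncomputable section

/-- The ℂ-bilinear extension of `B` to `V × V`, where `(a, b)` represents `a + i·b`. -/
def Bc {V : Type*} [AddCommGroup V] [Module ℝ V] (B : LinearMap.BilinForm ℝ V)
    (y z : V × V) : ℂ :=
  ⟨B y.1 z.1 - B y.2 z.2, B y.1 z.2 + B y.2 z.1⟩

/-- The inclusion of `V` into its complexification `V × V`. -/
def toC {V : Type*} [AddCommGroup V] (z : V) : V × V := (z, 0)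

/-- Complex conjugation on the complexification `V × V`. -/
def conjC {V : Type*} [AddCommGroup V] (y : V × V) : V × V := (y.1, -y.2)

/-- Scalar multiplication by a complex number on the complexification `V × V`. -/
def cSMul {V : Type*} [AddCommGroup V] [Module ℝ V] (s : ℂ) (y : V × V) : V × V :=
  (s.re • y.1 - s.im • y.2, s.im • y.1 + s.re • y.2)

/-- The (symmetric, nondegenerate) form `B` has signature `(3, dim V − 3)`: `V` splits as an
orthogonal direct sum of a 3-dimensional positive definite subspace and a negative definite
complement. -/
def IsSigThree {V : Type*} [AddCommGroup V] [Module ℝ V] (B : LinearMap.BilinForm ℝ V) : Prop :=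
  ∃ P N : Submodule ℝ V, IsCompl P N ∧ Module.finrank ℝ P = 3 ∧
    (∀ x ∈ P, ∀ y ∈ N, B x y = 0) ∧
    (∀ x ∈ P, x ≠ 0 → 0 < B x x) ∧ (∀ y ∈ N, y ≠ 0 → B y y < 0)

/-- The period domain `𝒢`: pairs `(α, β + i·x)` with `α² = 0`, `α·ᾱ > 0`, `α·x = 0`, `x² > 0`.
A point is `p = (α, (β, x))` where `α : V × V` is a complexified vector and `β, x ∈ V`. -/
def periodDomain {V : Type*} [AddCommGroup V] [Module ℝ V] (B : LinearMap.BilinForm ℝ V) :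
    Set ((V × V) × (V × V)) :=
  {p | Bc B p.1 p.1 = 0 ∧ 0 < (Bc B p.1 (conjC p.1)).re ∧
       Bc B p.1 (toC p.2.2) = 0 ∧ 0 < B p.2.2 p.2.2}

/- Mirror-map context: fix `n > 0` and `v, v* ∈ V` spanning a hyperbolic plane `U(n)`:
`v² = (v*)² = 0`, `v·v* = n`. -/

/-- The projection `pr(y) = y − ((y·v*)/n)·v − ((y·v)/n)·v*` on the complexification. -/
def prC {V : Type*} [AddCommGroup V] [Module ℝ V] (B : LinearMap.BilinForm ℝ V)
    (v vs : V) (n : ℝ) (y : V × V) : V × V :=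
  y - cSMul (Bc B y (toC vs) / (n : ℂ)) (toC v) - cSMul (Bc B y (toC v) / (n : ℂ)) (toC vs)

/-- The projection `pr` on real vectors: `pr(z) = z − ((z·v*)/n)·v − ((z·v)/n)·v*`. -/
def prR {V : Type*} [AddCommGroup V] [Module ℝ V] (B : LinearMap.BilinForm ℝ V)
    (v vs : V) (n : ℝ) (z : V) : V :=
  z - (B z vs / n) • v - (B z v / n) • vs

/-- The domain `Dom(m)^𝒢` of the mirror map: points `(α, β + ix) ∈ 𝒢` with
`Im α · v = 0`, `Re α · v ≠ 0`, `x·v = 0`, `β·v = 0`. -/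
def domM {V : Type*} [AddCommGroup V] [Module ℝ V] (B : LinearMap.BilinForm ℝ V)
    (v : V) : Set ((V × V) × (V × V)) :=
  {p | p ∈ periodDomain B ∧ B p.1.2 v = 0 ∧ B p.1.1 v ≠ 0 ∧ B p.2.2 v = 0 ∧ B p.2.1 v = 0}

/-- The mirror map
`m(α, β+ix) = ( [√n·pr(β+ix) − ½((β+ix)²)·v + v*] / (Re α · v), [√n·pr(α) − (α·β)·v] / (Re α · v) )`. -/
def mir {V : Type*} [AddCommGroup V] [Module ℝ V] (B : LinearMap.BilinForm ℝ V)
    (v vs : V) (n : ℝ) (p : (V × V) × (V × V)) : (V × V) × (V × V) :=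
  ((B p.1.1 v)⁻¹ •
      (Real.sqrt n • prC B v vs n p.2 - cSMul (Bc B p.2 p.2 / 2) (toC v) + toC vs),
   (B p.1.1 v)⁻¹ •
      (Real.sqrt n • prC B v vs n p.1 - cSMul (Bc B p.1 (toC p.2.1)) (toC v)))

open Polynomial in
theorem coeffs_eq_zero_of_infinite_setOf_quadratic_eq_zero {a b c : ℝ}
    (h : {l : ℝ | a * l ^ 2 + b * l + c = 0}.Infinite) : a = 0 ∧ b = 0 ∧ c = 0 := by
  set q : ℝ[X] := C a * X ^ 2 + C b * X + C c
  have hroots : {l : ℝ | a * l ^ 2 + b * l + c = 0} = {l | q.IsRoot l} := by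
    ext l; simp [q]
  have hq : q = 0 := by
    by_contra hq
    exact h (hroots ▸ finite_setOfPred_isRoot hq)
  refine ⟨?_, ?_, ?_⟩
  · simpa [q] using congrArg (coeff · 2) hq
  · simpa [q] using congrArg (coeff · 1) hq
  · simpa [q] using congrArg (coeff · 0) hq

theorem coeffs_eq_zero_of_infinite_setOf_linear_eq_zero {b c : ℝ}
    (h : {l : ℝ | b * l + c = 0}.Infinite) : b = 0 ∧ c = 0 :=
  (coeffs_eq_zero_of_infinite_setOf_quadratic_eq_zero (a := 0) (by simpa using h)).2

theorem Irrational.eq_zero_of_mul_intCast_add_intCast_eq_zero {r : ℝ} (hr : Irrational r)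
    {a b : ℤ} (h : r * a + b = 0) : a = 0 := by
  by_contra ha
  exact ((hr.mul_intCast ha).add_intCast b).ne_zero h

theorem Submodule.FG.countable {M : Type*} [AddCommGroup M] {Λ : Submodule ℤ M} (hΛ : Λ.FG) :
    (Λ : Set M).Countable := by
  have : Module.Finite ℤ Λ := Module.Finite.iff_fg.mpr hΛ
  exact Set.countable_coe_iff.mp (Finsupp.Countable.of_moduleFinite (R := ℤ))

section MirrorMap

variable {V : Type*} [AddCommGroup V] [Module ℝ V] (B : LinearMap.BilinForm ℝ V)
  (v vs : V) (n : ℝ)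

@[simp]
theorem Bc_toC_eq_zero_iff (y : V × V) (z : V) :
    Bc B y (toC z) = 0 ↔ B y.1 z = 0 ∧ B y.2 z = 0 := by
  simp [Bc, toC, Complex.ext_iff]

theorem prR_apply_eq_of_orthogonal {z D : V} (hvD : B v D = 0) (hvsD : B vs D = 0) :
    B (prR B v vs n z) D = B z D := by
  simp [prR, hvD, hvsD]

theorem mem_domM_smul {p : (V × V) × (V × V)} (hp : p ∈ domM B v) (l : ℝ) :
    (p.1, (l • p.2.1, p.2.2)) ∈ domM B v := by
  obtain ⟨hpG, hImv, hRev, hxv, hβv⟩ := hp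
  exact ⟨hpG, hImv, hRev, hxv, by simp [hβv]⟩

section Coordinates

variable (α : V × V) (β x : V) (l : ℝ) (D : V)

theorem mir_fst_fst_apply :
    B (mir B v vs n (α, (l • β, x))).1.1 D =
      (B α.1 v)⁻¹ * (-(B β β / 2 * B v D) * l ^ 2 + √n * B (prR B v vs n β) D * l +
        (B x x / 2 * B v D + B vs D)) := by
  simp only [mir, prC, prR, cSMul, Bc, toC, map_smul, LinearMap.smul_apply, smul_eq_mul, map_zero,
    sub_zero, zero_add, add_zero, smul_zero, smul_add, neg_mul, Complex.div_ofReal_re,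
    Complex.div_ofReal_im, Complex.div_ofNat_re, Complex.div_ofNat_im, Prod.mk_sub_mk, Prod.smul_mk,
    Prod.mk_add_mk, map_add, map_sub, LinearMap.add_apply, LinearMap.sub_apply]
  ring

theorem mir_fst_snd_apply :
    B (mir B v vs n (α, (l • β, x))).1.2 D =
      (B α.1 v)⁻¹ * (-((B β x + B x β) / 2 * B v D) * l + √n * B (prR B v vs n x) D) := by
  simp only [mir, prC, prR, cSMul, Bc, toC, map_smul, LinearMap.smul_apply, smul_eq_mul, map_zero,
    sub_zero, zero_add, add_zero, smul_zero, smul_add, neg_mul, Complex.div_ofReal_re,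
    Complex.div_ofReal_im, Complex.div_ofNat_re, Complex.div_ofNat_im, Prod.mk_sub_mk, Prod.smul_mk,
    Prod.mk_add_mk, map_sub, LinearMap.sub_apply]
  ring

theorem mir_snd_snd_apply :
    B (mir B v vs n (α, (l • β, x))).2.2 D =
      (B α.1 v)⁻¹ * (-(B α.2 β * B v D) * l + √n * B (prR B v vs n α.2) D) := by
  simp only [mir, prC, prR, cSMul, Bc, toC, map_smul, LinearMap.smul_apply, smul_eq_mul, map_zero,
    sub_zero, zero_add, add_zero, smul_zero, smul_add, neg_mul, Complex.div_ofReal_re,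
    Complex.div_ofReal_im, Complex.div_ofNat_re, Complex.div_ofNat_im, Prod.mk_sub_mk, Prod.smul_mk,
    Prod.mk_add_mk, Prod.smul_snd, Prod.snd_sub, map_sub, LinearMap.sub_apply]
  ring

end Coordinates

def mirWallHits (α : V × V) (β x D : V) : Set ℝ :=
  {l | Bc B (mir B v vs n (α, (l • β, x))).1 (toC D) = 0 ∧
    B (mir B v vs n (α, (l • β, x))).2.2 D = 0}

theorem mirWallHits_subset {α : V × V} (hα : B α.1 v ≠ 0) (β x D : V) :
    mirWallHits B v vs n α β x D ⊆
      {l | -(B β β / 2 * B v D) * l ^ 2 + √n * B (prR B v vs n β) D * l +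
          (B x x / 2 * B v D + B vs D) = 0} ∩
      {l | -((B β x + B x β) / 2 * B v D) * l + √n * B (prR B v vs n x) D = 0} ∩
      {l | -(B α.2 β * B v D) * l + √n * B (prR B v vs n α.2) D = 0} := by
  rintro l ⟨hαD, hxD⟩
  rw [Bc_toC_eq_zero_iff, mir_fst_fst_apply, mir_fst_snd_apply] at hαD
  rw [mir_snd_snd_apply] at hxD
  simp only [mul_eq_zero, inv_eq_zero, hα, false_or] at hαD hxD
  exact ⟨hαD, hxD⟩

theorem finite_mirWallHits (hn : 0 < n) {α : V × V} (hα : B α.1 v ≠ 0) {β x D : V}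
    (hvD : ∃ k : ℤ, B v D = k) (hvsD : ∃ k : ℤ, B vs D = k) (hx : Irrational (B x x))
    (hαxD : ¬ (Bc B α (toC D) = 0 ∧ B x D = 0))
    (hβD : (B (prR B v vs n α.1) D ≠ 0 → B (prR B v vs n β) D ≠ 0) ∨
      (Bc B α (toC D) ≠ 0 → B α.2 D ≠ 0)) :
    (mirWallHits B v vs n α β x D).Finite := by
  refine Set.not_infinite.mp fun hinf => ?_
  have hinf₃ := hinf.mono (mirWallHits_subset B v vs n hα β x D)
  have hinf₂ := hinf₃.mono Set.inter_subset_left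
  obtain ⟨-, hβ₀, hc⟩ := coeffs_eq_zero_of_infinite_setOf_quadratic_eq_zero
    (hinf₂.mono Set.inter_subset_left)
  obtain ⟨-, hx₀⟩ := coeffs_eq_zero_of_infinite_setOf_linear_eq_zero
    (hinf₂.mono Set.inter_subset_right)
  obtain ⟨-, hIm₀⟩ := coeffs_eq_zero_of_infinite_setOf_linear_eq_zero
    (hinf₃.mono Set.inter_subset_right)
  obtain ⟨k, hk⟩ := hvD
  obtain ⟨m, hm⟩ := hvsD
  have hk₀ : k = 0 := hx.eq_zero_of_mul_intCast_add_intCast_eq_zero (b := 2 * m) <| by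
    rw [hk, hm] at hc
    push_cast
    linarith
  have hv₀ : B v D = 0 := by simp [hk, hk₀]
  have hvs₀ : B vs D = 0 := by simpa [hv₀] using hc
  have hsqrt : √n ≠ 0 := (Real.sqrt_pos.2 hn).ne'
  simp only [prR_apply_eq_of_orthogonal B v vs n hv₀ hvs₀, mul_eq_zero, hsqrt, false_or]
    at hβ₀ hx₀ hIm₀ hβD
  have hα₀ : Bc B α (toC D) ≠ 0 := fun h => hαxD ⟨h, hx₀⟩
  have hRe₀ : B α.1 D ≠ 0 := fun h => hα₀ ((Bc_toC_eq_zero_iff B α D).2 ⟨h, hIm₀⟩)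
  rcases hβD with h | h
  · exact h hRe₀ hβ₀
  · exact h hα₀ hIm₀

end MirrorMap

theorem statement10_general {V : Type*} [NormedAddCommGroup V] [NormedSpace ℝ V]
    (B : LinearMap.BilinForm ℝ V)
    (Λ : Submodule ℤ V) (hfg : Λ.FG)
    (hint : ∀ x ∈ Λ, ∀ y ∈ Λ, ∃ k : ℤ, B x y = (k : ℝ))
    (n : ℕ) (hn : 0 < n) (v vs : V) (hvΛ : v ∈ Λ) (hvsΛ : vs ∈ Λ)
    (𝒲 : Set V) (h𝒲Λ : 𝒲 ⊆ (Λ : Set V))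
    (p : (V × V) × (V × V)) (hp : p ∈ domM B v)
    (h1 : ¬ ∃ D ∈ 𝒲, Bc B p.1 (toC D) = 0 ∧ B p.2.2 D = 0)
    (h2 : Irrational (B p.2.2 p.2.2))
    (h3 : ∀ D ∈ 𝒲,
      (B (prR B v vs n p.1.1) D ≠ 0 → B (prR B v vs n p.2.1) D ≠ 0) ∨
      (Bc B p.1 (toC D) ≠ 0 → B p.1.2 D ≠ 0)) :
    ∃ Pi : Set ℝ, (∀ l ∈ Pi, l ≠ 0) ∧ ¬ Pi.Countable ∧ Dense Pi ∧
      ∀ l ∈ Pi, (p.1, (l • p.2.1, p.2.2)) ∈ domM B v ∧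
        ¬ ∃ D ∈ 𝒲,
          Bc B (mir B v vs n (p.1, (l • p.2.1, p.2.2))).1 (toC D) = 0 ∧
          B (mir B v vs n (p.1, (l • p.2.1, p.2.2))).2.2 D = 0 := by
  have hfinite : ∀ D ∈ 𝒲, (mirWallHits B v vs n p.1 p.2.1 p.2.2 D).Finite := fun D hD =>
    finite_mirWallHits B v vs n (Nat.cast_pos.2 hn) hp.2.2.1 (hint v hvΛ D (h𝒲Λ hD))
      (hint vs hvsΛ D (h𝒲Λ hD)) h2 (fun h => h1 ⟨D, hD, h⟩) (h3 D hD)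
  set S : Set ℝ := insert 0 (⋃ D ∈ 𝒲, mirWallHits B v vs n p.1 p.2.1 p.2.2 D)
  have hS : S.Countable :=
    ((hfg.countable.mono h𝒲Λ).biUnion fun D hD => (hfinite D hD).countable).insert 0
  refine ⟨Sᶜ, fun l hl h0 => hl (h0 ▸ Set.mem_insert 0 _),
    fun hc => Set.not_countable_univ (Set.compl_union_self S ▸ hc.union hS),
    hS.dense_compl ℝ, fun l hl => ⟨mem_domM_smul B v hp l, ?_⟩⟩
  rintro ⟨D, hD, hhit⟩
  exact hl (Set.mem_insert_of_mem _ (Set.mem_biUnion hD hhit))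

/-- (Lattice context: `Λ ⊆ V` is a full lattice of rank `≥ 5` on which the
form is integral, `Λ = ℤv ⊕ ℤv* ⊕ (Λ ∩ {v,v*}^⊥)` with `v² = (v*)² = 0`, `v·v* = n > 0`, and
`𝒲 ⊆ Λ` is a set of primitive vectors of negative square.)
Suppose `(α, β + ix) ∈ Dom(m)^𝒢` satisfies: (1) no `D ∈ 𝒲` has `α·D = 0` and `x·D = 0`;
(2) `x²` is irrational; (3) for each `D ∈ 𝒲`, either `pr(Re α)·D ≠ 0 → pr(β)·D ≠ 0` or
`α·D ≠ 0 → Im α·D ≠ 0`.  Then there is an uncountable dense set `Π ⊆ ℝ∖{0}` such that for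
every `λ ∈ Π` the point `(α, λβ + ix)` lies in `Dom(m)^𝒢` and, writing
`m(α, λβ + ix) = (α∨_λ, β∨_λ + i x∨_λ)`, no `D ∈ 𝒲` has `α∨_λ·D = 0` and `x∨_λ·D = 0`. -/
theorem statement10 {V : Type*} [NormedAddCommGroup V] [NormedSpace ℝ V] [FiniteDimensional ℝ V]
    (B : LinearMap.BilinForm ℝ V)
    (hsymm : ∀ x y : V, B x y = B y x)
    (hnd : ∀ x : V, (∀ y : V, B x y = 0) → x = 0)
    (hsig : IsSigThree B)
    (Λ : Submodule ℤ V) (hspan : Submodule.span ℝ (Λ : Set V) = ⊤) (hfg : Λ.FG)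
    (hrank : 5 ≤ Module.finrank ℝ V)
    (hint : ∀ x ∈ Λ, ∀ y ∈ Λ, ∃ k : ℤ, B x y = (k : ℝ))
    (n : ℕ) (hn : 0 < n) (v vs : V) (hvΛ : v ∈ Λ) (hvsΛ : vs ∈ Λ)
    (hv : B v v = 0) (hvs : B vs vs = 0) (hvvs : B v vs = (n : ℝ))
    (hdec : ∀ l ∈ Λ, ∃ a b : ℤ,
      l - a • v - b • vs ∈ Λ ∧ B (l - a • v - b • vs) v = 0 ∧ B (l - a • v - b • vs) vs = 0)
    (𝒲 : Set V) (h𝒲Λ : 𝒲 ⊆ (Λ : Set V)) (h𝒲neg : ∀ D ∈ 𝒲, B D D < 0)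
    (h𝒲prim : ∀ D ∈ 𝒲, ∀ l ∈ Λ, ∀ k : ℤ, 2 ≤ k.natAbs → (k : ℝ) • l ≠ D)
    (p : (V × V) × (V × V)) (hp : p ∈ domM B v)
    (h1 : ¬ ∃ D ∈ 𝒲, Bc B p.1 (toC D) = 0 ∧ B p.2.2 D = 0)
    (h2 : Irrational (B p.2.2 p.2.2))
    (h3 : ∀ D ∈ 𝒲,
      (B (prR B v vs n p.1.1) D ≠ 0 → B (prR B v vs n p.2.1) D ≠ 0) ∨
      (Bc B p.1 (toC D) ≠ 0 → B p.1.2 D ≠ 0)) :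
    ∃ Pi : Set ℝ, (∀ l ∈ Pi, l ≠ 0) ∧ ¬ Pi.Countable ∧ Dense Pi ∧
      ∀ l ∈ Pi, (p.1, (l • p.2.1, p.2.2)) ∈ domM B v ∧
        ¬ ∃ D ∈ 𝒲,
          Bc B (mir B v vs n (p.1, (l • p.2.1, p.2.2))).1 (toC D) = 0 ∧
          B (mir B v vs n (p.1, (l • p.2.1, p.2.2))).2.2 D = 0 :=
  statement10_general B Λ hfg hint n hn v vs hvΛ hvsΛ 𝒲 h𝒲Λ p hp h1 h2 h3
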